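/- Let η_f := max_x P(S=1|X_f=x) over the support of X_f, and suppose η_f < 1 and 0 < P(S=1) < 1. Then for every decision variable Ŷ_f that is conditionally independent of S given X_f and satisfies P(Ŷ_f=1, S=1) > 0, the normalized disparate impact satisfies DI(Ŷ_f, S) = 1 − P(Ŷ_f=1|S=0)/P(Ŷ_f=1|S=1) ≤ 1 − [P(S=1)(1−η_f)] / [P(S=0)·η_f]. -/
import Mathlib


open Finset Classical Real

open Classical in
/-- Probability of event `E` under weight function `p` on a finite sample space. -/
noncomputable def Pr {Ω : Type*} [Fintype Ω] (p : Ω → ℝ) (E : Ω → Prop) : ℝ :=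
  ∑ ω, if E ω then p ω else 0

/-- Conditional probability `P(A | B)`. -/
noncomputable def cPr {Ω : Type*} [Fintype Ω] (p : Ω → ℝ) (A B : Ω → Prop) : ℝ :=
  Pr p (fun ω => A ω ∧ B ω) / Pr p B

/-- Statistical parity `SP(Ŷ,S) = P(Ŷ=1|S=1) - P(Ŷ=1|S=0)`. -/
noncomputable def SP {Ω : Type*} [Fintype Ω] (p : Ω → ℝ) (Yhat S : Ω → Bool) : ℝ :=
  cPr p (fun ω => Yhat ω = true) (fun ω => S ω = true)
    - cPr p (fun ω => Yhat ω = true) (fun ω => S ω = false)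

/-- Balanced error rate `BER(Ŷ,S) = ½P(Ŷ=1|S=0) + ½P(Ŷ=0|S=1)`. -/
noncomputable def BER {Ω : Type*} [Fintype Ω] (p : Ω → ℝ) (Yhat S : Ω → Bool) : ℝ :=
  (1/2) * cPr p (fun ω => Yhat ω = true) (fun ω => S ω = false)
    + (1/2) * cPr p (fun ω => Yhat ω = false) (fun ω => S ω = true)

/-- `Ŷ` is conditionally independent of `S` given `Z`. -/
def CondIndepGiven {Ω 𝒳 : Type*} [Fintype Ω] (p : Ω → ℝ) (Yhat S : Ω → Bool)
    (Z : Ω → 𝒳) : Prop :=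
  ∀ x : 𝒳, 0 < Pr p (fun ω => Z ω = x) →
    cPr p (fun ω => Yhat ω = true ∧ S ω = true) (fun ω => Z ω = x)
      = cPr p (fun ω => Yhat ω = true) (fun ω => Z ω = x)
        * cPr p (fun ω => S ω = true) (fun ω => Z ω = x)

/-- Normalized disparate impact `DI(Ŷ,S) = 1 - P(Ŷ=1|S=0)/P(Ŷ=1|S=1)`. -/
noncomputable def DI {Ω : Type*} [Fintype Ω] (p : Ω → ℝ) (Yhat S : Ω → Bool) : ℝ :=
  1 - cPr p (fun ω => Yhat ω = true) (fun ω => S ω = false)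
      / cPr p (fun ω => Yhat ω = true) (fun ω => S ω = true)

section Aux
variable {Ω 𝒳 : Type*} [Fintype Ω] [Fintype 𝒳]

lemma Pr_nonneg (p : Ω → ℝ) (hp : ∀ ω, 0 ≤ p ω) (E : Ω → Prop) : 0 ≤ Pr p E := by
  apply Finset.sum_nonneg; intro ω _
  split <;> simp [hp ω]

lemma Pr_congr (p : Ω → ℝ) {E F : Ω → Prop} (h : ∀ ω, E ω ↔ F ω) : Pr p E = Pr p F := by
  unfold Pr; apply Finset.sum_congr rfl; intro ω _; simp [h ω]

lemma Pr_mono (p : Ω → ℝ) (hp : ∀ ω, 0 ≤ p ω) {E F : Ω → Prop} (h : ∀ ω, E ω → F ω) :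
    Pr p E ≤ Pr p F := by
  apply Finset.sum_le_sum; intro ω _
  by_cases hE : E ω
  · simp [hE, h ω hE]
  · simp only [hE, if_false]
    split <;> simp [hp ω]

lemma Pr_partition (p : Ω → ℝ) (E : Ω → Prop) (Xf : Ω → 𝒳) :
    Pr p E = ∑ x, Pr p (fun ω => E ω ∧ Xf ω = x) := by
  classical
  unfold Pr
  rw [Finset.sum_comm]
  apply Finset.sum_congr rfl; intro ω _
  by_cases hE : E ω
  · simp only [hE, true_and]
    rw [Finset.sum_ite_eq]
    simp
  · simp [hE]

lemma Pr_split_S (p : Ω → ℝ) (E : Ω → Prop) (S : Ω → Bool) :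
    Pr p E = Pr p (fun ω => E ω ∧ S ω = true) + Pr p (fun ω => E ω ∧ S ω = false) := by
  unfold Pr
  rw [← Finset.sum_add_distrib]
  apply Finset.sum_congr rfl; intro ω _
  by_cases hE : E ω <;> cases h : S ω <;> simp [hE, h]

lemma cPr_nonneg (p : Ω → ℝ) (hp : ∀ ω, 0 ≤ p ω) (A B : Ω → Prop) : 0 ≤ cPr p A B :=
  div_nonneg (Pr_nonneg p hp _) (Pr_nonneg p hp _)

lemma Pr_eq_cPr_mul (p : Ω → ℝ) (A B : Ω → Prop) (hB : Pr p B ≠ 0) :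
    Pr p (fun ω => A ω ∧ B ω) = cPr p A B * Pr p B := by
  unfold cPr; rw [div_mul_cancel₀ _ hB]

end Aux

/-- with `η_f = max_x P(S=1|X_f=x)` over the support of `X_f`
(`η_f < 1`), any decision `Ŷ_f` conditionally independent of `S` given `X_f`
with `P(Ŷ_f=1, S=1) > 0` satisfies
`DI(Ŷ_f,S) ≤ 1 - P(S=1)(1-η_f) / (P(S=0)·η_f)`. -/
theorem stmt5 {Ω 𝒳 : Type*} [Fintype Ω] [Fintype 𝒳] (p : Ω → ℝ) (hp : ∀ ω, 0 ≤ p ω)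
    (hsum : ∑ ω, p ω = 1) (S Yf : Ω → Bool) (Xf : Ω → 𝒳)
    (hS1 : 0 < Pr p (fun ω => S ω = true)) (hS1' : Pr p (fun ω => S ω = true) < 1)
    (ηf : ℝ)
    (hηub : ∀ x : 𝒳, 0 < Pr p (fun ω => Xf ω = x) →
      cPr p (fun ω => S ω = true) (fun ω => Xf ω = x) ≤ ηf)
    (hηatt : ∃ x : 𝒳, 0 < Pr p (fun ω => Xf ω = x) ∧
      cPr p (fun ω => S ω = true) (fun ω => Xf ω = x) = ηf)
    (hηlt : ηf < 1)
    (hci : CondIndepGiven p Yf S Xf)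
    (hpos : 0 < Pr p (fun ω => Yf ω = true ∧ S ω = true)) :
    DI p Yf S ≤ 1 - (Pr p (fun ω => S ω = true) * (1 - ηf))
      / (Pr p (fun ω => S ω = false) * ηf) := by
  classical
  set a := Pr p (fun ω => S ω = true) with ha_def
  set b := Pr p (fun ω => S ω = false) with hb_def
  have hab : a + b = 1 := by
    rw [ha_def, hb_def]
    unfold Pr
    rw [← Finset.sum_add_distrib, ← hsum]
    apply Finset.sum_congr rfl; intro ω _
    cases h : S ω <;> simp [h]
  have hb : 0 < b := by linarith
  set J1 := Pr p (fun ω => Yf ω = true ∧ S ω = true) with hJ1_def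
  set J0 := Pr p (fun ω => Yf ω = true ∧ S ω = false) with hJ0_def
  have hJ0 : 0 ≤ J0 := Pr_nonneg p hp _
  -- per-x inequality
  have perx : ∀ x : 𝒳,
      (1 - ηf) * Pr p (fun ω => (Yf ω = true ∧ S ω = true) ∧ Xf ω = x)
        ≤ ηf * Pr p (fun ω => (Yf ω = true ∧ S ω = false) ∧ Xf ω = x) := by
    intro x
    by_cases hq : 0 < Pr p (fun ω => Xf ω = x)
    · have hqne : Pr p (fun ω => Xf ω = x) ≠ 0 := ne_of_gt hq
      set q := Pr p (fun ω => Xf ω = x) with hq_def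
      set y := cPr p (fun ω => Yf ω = true) (fun ω => Xf ω = x) with hy_def
      set s := cPr p (fun ω => S ω = true) (fun ω => Xf ω = x) with hs_def
      have hs : s ≤ ηf := hηub x hq
      have hy : 0 ≤ y := cPr_nonneg p hp _ _
      have e1 : Pr p (fun ω => (Yf ω = true ∧ S ω = true) ∧ Xf ω = x) = (y * s) * q := by
        rw [Pr_eq_cPr_mul p (fun ω => Yf ω = true ∧ S ω = true) (fun ω => Xf ω = x) hqne,
          hci x hq]
      have eY : Pr p (fun ω => Yf ω = true ∧ Xf ω = x) = y * q := by
        rw [Pr_eq_cPr_mul p (fun ω => Yf ω = true) (fun ω => Xf ω = x) hqne]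
      have e0 : Pr p (fun ω => (Yf ω = true ∧ S ω = false) ∧ Xf ω = x)
          = y * q - (y * s) * q := by
        have split := Pr_split_S p (fun ω => Yf ω = true ∧ Xf ω = x) S
        have c1 : Pr p (fun ω => (Yf ω = true ∧ Xf ω = x) ∧ S ω = true)
            = Pr p (fun ω => (Yf ω = true ∧ S ω = true) ∧ Xf ω = x) :=
          Pr_congr p (by tauto)
        have c0 : Pr p (fun ω => (Yf ω = true ∧ Xf ω = x) ∧ S ω = false)
            = Pr p (fun ω => (Yf ω = true ∧ S ω = false) ∧ Xf ω = x) :=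
          Pr_congr p (by tauto)
        rw [c1, c0, e1, eY] at split
        linarith
      rw [e1, e0]
      nlinarith [mul_le_mul_of_nonneg_left hs (mul_nonneg hy hq.le)]
    · push_neg at hq
      have hq0 : Pr p (fun ω => Xf ω = x) = 0 :=
        le_antisymm hq (Pr_nonneg p hp _)
      have z1 : Pr p (fun ω => (Yf ω = true ∧ S ω = true) ∧ Xf ω = x) = 0 :=
        le_antisymm (hq0 ▸ Pr_mono p hp (fun ω h => h.2)) (Pr_nonneg p hp _)
      have z0 : Pr p (fun ω => (Yf ω = true ∧ S ω = false) ∧ Xf ω = x) = 0 :=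
        le_antisymm (hq0 ▸ Pr_mono p hp (fun ω h => h.2)) (Pr_nonneg p hp _)
      rw [z1, z0]; simp
  have key : (1 - ηf) * J1 ≤ ηf * J0 := by
    rw [hJ1_def, hJ0_def, Pr_partition p _ Xf, Pr_partition p (fun ω => Yf ω = true ∧ S ω = false) Xf,
      Finset.mul_sum, Finset.mul_sum]
    exact Finset.sum_le_sum fun x _ => perx x
  have hηpos : 0 < ηf := by
    by_contra h
    push_neg at h
    have h1 : ηf * J0 ≤ 0 := mul_nonpos_of_nonpos_of_nonneg h hJ0
    have h2 : 0 < (1 - ηf) * J1 := mul_pos (by linarith) hpos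
    linarith
  -- final arithmetic
  have hc1 : cPr p (fun ω => Yf ω = true) (fun ω => S ω = true) = J1 / a := rfl
  have hc0 : cPr p (fun ω => Yf ω = true) (fun ω => S ω = false) = J0 / b := rfl
  unfold DI
  rw [hc1, hc0]
  have hmain : a * (1 - ηf) / (b * ηf) ≤ (J0 / b) / (J1 / a) := by
    have hrw : (J0 / b) / (J1 / a) = (a * J0) / (b * J1) := by
      field_simp
    rw [hrw, div_le_div_iff₀ (mul_pos hb hηpos) (mul_pos hb hpos)]
    nlinarith [mul_le_mul_of_nonneg_left key (mul_pos hS1 hb).le]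
  linarith
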